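/- arXiv:1411.2043 — 3 statements merged into one kernel-verified Lean document; each statement's English description precedes it below -/
import Mathlib

section
/- For every integer $k \ge 1$ there exists a function $f : \mathbb{R} \to \mathbb{C}$ of class $C^k$ that is not of class $C^{\infty}$ on any nonempty open interval. -/
open Set Metric Filter

namespace Stmt10Aux

noncomputable def g (m : ℕ) (x : ℝ) : ℝ := x ^ m * |x|

theorem g_cont (m : ℕ) : Continuous (g m) := (continuous_pow m).mul continuous_abs

theorem hasDerivAt_mul_of_continuousAt {u : ℝ → ℝ} {f : ℝ → ℝ} (hu : ContinuousAt u 0)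
    (hf : ∀ x, f x = x * u x) : HasDerivAt f (u 0) 0 := by
  rw [hasDerivAt_iff_tendsto_slope]
  have : slope f 0 =ᶠ[nhdsWithin 0 {(0:ℝ)}ᶜ] u := by
    filter_upwards [self_mem_nhdsWithin] with x hx
    have hx0 : x ≠ 0 := hx
    simp [slope, hf, hx0]
  exact Tendsto.congr' this.symm (hu.continuousWithinAt.tendsto)

theorem hasDerivAt_g (m : ℕ) (x : ℝ) :
    HasDerivAt (g (m+1)) (((m:ℝ)+2) * g m x) x := by
  rcases lt_trichotomy x 0 with hx | hx | hx
  · have hev : (fun y => -(y ^ (m+2))) =ᶠ[nhds x] g (m+1) := by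
      filter_upwards [gt_mem_nhds hx] with y hy
      simp [g, abs_of_neg hy, pow_succ]
    have := ((hasDerivAt_pow (m+2) x).neg).congr_of_eventuallyEq hev.symm
    refine this.congr_deriv ?_
    have hax : |x| = -x := abs_of_neg hx
    simp only [g, hax, pow_succ]
    push_cast
    ring
  · subst hx
    have := hasDerivAt_mul_of_continuousAt (u := g m) ((g_cont m).continuousAt)
      (f := g (m+1)) (fun x => by simp [g, pow_succ]; ring)
    convert this using 1
    simp [g]

  · have hev : (fun y => y ^ (m+2)) =ᶠ[nhds x] g (m+1) := by
      filter_upwards [lt_mem_nhds hx] with y hy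
      simp [g, abs_of_pos hy, pow_succ]
    have := (hasDerivAt_pow (m+2) x).congr_of_eventuallyEq hev.symm
    refine this.congr_deriv ?_
    have hax : |x| = x := abs_of_pos hx
    simp only [g, hax, pow_succ]
    push_cast
    ring

theorem deriv_g (m : ℕ) : deriv (g (m+1)) = fun x => ((m:ℝ)+2) * g m x :=
  funext fun x => (hasDerivAt_g m x).deriv

theorem contDiff_g (m : ℕ) : ContDiff ℝ (m : ℕ) (g m) := by
  induction m with
  | zero => exact contDiff_zero.2 (g_cont 0)
  | succ m ih =>
    have : ((m+1 : ℕ) : WithTop ℕ∞) = (m : WithTop ℕ∞) + 1 := by push_cast; ring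
    rw [this, contDiff_succ_iff_deriv]
    refine ⟨fun x => (hasDerivAt_g m x).differentiableAt, ?_, ?_⟩
    · intro h; simp at h
    · rw [deriv_g m]
      exact contDiff_const.mul ih

theorem contDiffAt_g (n : WithTop ℕ∞) (m : ℕ) {x : ℝ} (hx : x ≠ 0) :
    ContDiffAt ℝ n (g m) x := by
  rcases hx.lt_or_gt with hx | hx
  · have hev : g m =ᶠ[nhds x] fun y => -(y ^ (m+1)) := by
      filter_upwards [gt_mem_nhds hx] with y hy
      simp [g, abs_of_neg hy, pow_succ]
    exact (((contDiff_id.pow (m+1)).neg.contDiffAt)).congr_of_eventuallyEq hev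
  · have hev : g m =ᶠ[nhds x] fun y => y ^ (m+1) := by
      filter_upwards [lt_mem_nhds hx] with y hy
      simp [g, abs_of_pos hy, pow_succ]
    exact (((contDiff_id.pow (m+1)).contDiffAt)).congr_of_eventuallyEq hev

theorem not_contDiffOn_g (m : ℕ) (s : Set ℝ) (hs : IsOpen s) (h0 : (0:ℝ) ∈ s) :
    ¬ ContDiffOn ℝ ((m+1 : ℕ) : WithTop ℕ∞) (g m) s := by
  induction m generalizing s with
  | zero =>
    intro h
    have : DifferentiableAt ℝ (g 0) 0 :=
      (h.differentiableOn (by norm_num)).differentiableAt (hs.mem_nhds h0)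
    have hg0 : g 0 = (abs : ℝ → ℝ) := funext fun x => by simp [g]
    rw [hg0] at this
    exact not_differentiableAt_abs_zero this
  | succ m ih =>
    intro h
    have hd : ContDiffOn ℝ ((m+1 : ℕ) : WithTop ℕ∞) (deriv (g (m+1))) s := by
      refine h.deriv_of_isOpen hs ?_
      push_cast; ring_nf; exact le_refl _
    rw [deriv_g m] at hd
    have hc : ((m:ℝ)+2) ≠ 0 := by positivity
    have : ContDiffOn ℝ ((m+1 : ℕ) : WithTop ℕ∞) (g m) s := by
      have := hd.const_smul (((m:ℝ)+2)⁻¹)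
      refine this.congr fun x hx => ?_
      simp [smul_eq_mul]
      field_simp
    exact ih s hs h0 this

end Stmt10Aux

open Set Metric Filter Finset Stmt10Aux

/-- For every `k ≥ 1` there is a `C^k` function `f : ℝ → ℂ` that is not `C^∞` on any
nonempty open interval. -/
theorem stmt10 (k : ℕ) (hk : 1 ≤ k) :
    ∃ f : ℝ → ℂ, ContDiff ℝ k f ∧
      ∀ a b : ℝ, a < b → ¬ ContDiffOn ℝ (⊤ : ℕ∞) f (Set.Ioo a b) := by
  classical
  -- enumeration of the rationals
  let e : ℕ ≃ ℚ := (Denumerable.eqv ℚ).symm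
  let p : ℕ → ℝ := fun n => ((e n : ℚ) : ℝ)
  have hp_inj : Function.Injective p := fun m n hmn => e.injective (Rat.cast_injective hmn)
  -- bump function
  let φ : ContDiffBump (0 : ℝ) := ⟨1, 2, one_pos, one_lt_two⟩
  -- building blocks
  let h : ℕ → ℝ → ℝ := fun j x => φ (x - p j) * g (k + j) (x - p j)
  have hsub : ∀ (n : WithTop ℕ∞) (c : ℝ), ContDiff ℝ n (fun x : ℝ => x - c) :=
    fun n c => contDiff_id.sub contDiff_const
  have contDiff_h : ∀ j, ContDiff ℝ (k + j : ℕ) (h j) := fun j =>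
    ((φ.contDiff (n := ((k + j : ℕ) : ℕ∞))).comp (hsub _ _)).mul
      ((contDiff_g (k + j)).comp (hsub _ _))
  have hsupp : ∀ j, HasCompactSupport (h j) := by
    intro j
    refine HasCompactSupport.intro (isCompact_closedBall (p j) 2) (fun x hx => ?_)
    have hd : (2:ℝ) ≤ dist (x - p j) 0 := by
      simp only [mem_closedBall, not_le] at hx
      rw [Real.dist_eq, sub_zero]
      rw [Real.dist_eq] at hx
      exact le_of_lt hx
    have : φ (x - p j) = 0 := φ.zero_of_le_dist hd
    simp [h, this]
  -- uniform bounds on derivatives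
  have hbound : ∀ j, ∃ C : ℝ, 0 ≤ C ∧
      ∀ i ≤ k + j, ∀ x, ‖iteratedFDeriv ℝ i (h j) x‖ ≤ C := by
    intro j
    have key : ∀ i : Fin (k + j + 1), ∃ C, ∀ x, ‖iteratedFDeriv ℝ (i : ℕ) (h j) x‖ ≤ C := by
      intro i
      have hi : (i : ℕ) ≤ k + j := Nat.lt_succ_iff.mp i.isLt
      have hc : Continuous (iteratedFDeriv ℝ (i : ℕ) (h j)) :=
        (contDiff_h j).continuous_iteratedFDeriv (by exact_mod_cast hi)
      have hcs : HasCompactSupport (fun x => ‖iteratedFDeriv ℝ (i : ℕ) (h j) x‖) :=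
        ((hsupp j).iteratedFDeriv _).norm
      obtain ⟨x₀, hx₀⟩ := (hc.norm).exists_forall_ge_of_hasCompactSupport hcs
      exact ⟨_, hx₀⟩
    choose B hB using key
    refine ⟨∑ i : Fin (k + j + 1), |B i|, Finset.sum_nonneg fun _ _ => abs_nonneg _, ?_⟩
    intro i hi x
    calc ‖iteratedFDeriv ℝ i (h j) x‖ ≤ B ⟨i, Nat.lt_succ_of_le hi⟩ :=
          hB ⟨i, Nat.lt_succ_of_le hi⟩ x
      _ ≤ |B ⟨i, Nat.lt_succ_of_le hi⟩| := le_abs_self _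
      _ ≤ ∑ i : Fin (k + j + 1), |B i| :=
        Finset.single_le_sum (f := fun i : Fin (k + j + 1) => |B i|)
          (fun _ _ => abs_nonneg _) (Finset.mem_univ _)
  choose C hC0 hC using hbound
  -- the coefficients
  let a : ℕ → ℝ := fun j => (1/2 : ℝ) ^ j / (C j + 1)
  have ha_pos : ∀ j, 0 < a j := fun j =>
    div_pos (pow_pos (by norm_num) j) (by linarith [hC0 j])
  let term : ℕ → ℝ → ℝ := fun j x => a j * h j x
  have hterm_cd : ∀ j, ContDiff ℝ (k + j : ℕ) (term j) := fun j =>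
    contDiff_const.mul (contDiff_h j)
  have hterm_bound : ∀ j i, i ≤ k + j → ∀ x,
      ‖iteratedFDeriv ℝ i (term j) x‖ ≤ (1/2 : ℝ) ^ j := by
    intro j i hi x
    have heq : term j = a j • h j := by
      funext y; simp [term, smul_eq_mul]
    rw [heq, iteratedFDeriv_const_smul_apply ((contDiff_h j).of_le (by exact_mod_cast hi)).contDiffAt]
    refine le_trans (norm_smul_le (a j) (iteratedFDeriv ℝ i (h j) x)) ?_
    rw [Real.norm_eq_abs, abs_of_pos (ha_pos j)]
    calc a j * ‖iteratedFDeriv ℝ i (h j) x‖ ≤ a j * C j :=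
          mul_le_mul_of_nonneg_left (hC j i hi x) (ha_pos j).le
      _ = (1/2 : ℝ) ^ j * (C j / (C j + 1)) := by
          simp only [a]; field_simp
      _ ≤ (1/2 : ℝ) ^ j * 1 := by
          refine mul_le_mul_of_nonneg_left ?_ (by positivity)
          rw [div_le_one (by linarith [hC0 j])]; linarith [hC0 j]
      _ = (1/2 : ℝ) ^ j := mul_one _
  have hsummable_geom : Summable (fun j : ℕ => (1/2 : ℝ) ^ j) :=
    summable_geometric_of_lt_one (by norm_num) (by norm_num)
  have hsum : ∀ x, Summable (fun j => term j x) := by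
    intro x
    refine Summable.of_norm_bounded hsummable_geom (fun j => ?_)
    have := hterm_bound j 0 (Nat.zero_le _) x
    rwa [norm_iteratedFDeriv_zero] at this
  let F : ℝ → ℝ := fun x => ∑' j, term j x
  -- F is C^k
  have hF : ContDiff ℝ (k : ℕ) F := by
    refine contDiff_tsum (N := (k : ℕ∞)) (v := fun _ j => (1/2 : ℝ) ^ j)
      (fun j => (hterm_cd j).of_le (by exact_mod_cast Nat.le_add_right k j))
      (fun i _ => hsummable_geom) (fun i j x hi => ?_)
    have hik : i ≤ k := by exact_mod_cast hi
    exact hterm_bound j i (le_trans hik (Nat.le_add_right k j)) x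
  -- the tails are smoother
  have hTail : ∀ i : ℕ, ContDiff ℝ (k + i + 1 : ℕ) (fun x => ∑' j, term (j + (i+1)) x) := by
    intro i
    refine contDiff_tsum (N := ((k + i + 1 : ℕ) : ℕ∞)) (v := fun _ j => (1/2 : ℝ) ^ (j + (i+1)))
      (fun j => (hterm_cd (j + (i+1))).of_le (by exact_mod_cast by omega)) (fun l _ => ?_)
      (fun l j x hl => ?_)
    · simp_rw [pow_add]
      exact hsummable_geom.mul_right _
    · have hlk : l ≤ k + i + 1 := by exact_mod_cast hl
      exact hterm_bound (j + (i+1)) l (by omega) x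
  -- the decomposition of F
  have hdecomp : ∀ (i : ℕ) (x : ℝ),
      F x = (∑ j ∈ Finset.range (i+1), term j x) + ∑' j, term (j + (i+1)) x := by
    intro i x
    exact ((hsum x).sum_add_tsum_nat_add (i+1)).symm
  refine ⟨fun x => (F x : ℂ), Complex.ofRealCLM.contDiff.comp hF, ?_⟩
  intro A B hAB hcontra
  -- get a real version of the hypothesis
  have hFR : ContDiffOn ℝ (⊤ : ℕ∞) F (Set.Ioo A B) := by
    have := Complex.reCLM.contDiff.comp_contDiffOn hcontra
    refine this.congr fun x _ => ?_
    simp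
  obtain ⟨q, hq1, hq2⟩ := exists_rat_btwn hAB
  obtain ⟨i, hpi⟩ : ∃ i, p i = (q : ℝ) := ⟨e.symm q, by simp [p]⟩
  -- find a suitable ball around p i
  have hUopen : IsOpen (Set.Ioo A B ∩ (⋂ j ∈ Finset.range i, ({p j}ᶜ : Set ℝ)) ∩ ball (p i) 1) := by
    refine IsOpen.inter (IsOpen.inter isOpen_Ioo ?_) isOpen_ball
    exact isOpen_biInter_finset fun j _ => isOpen_compl_singleton
  have hpiU : p i ∈ Set.Ioo A B ∩ (⋂ j ∈ Finset.range i, ({p j}ᶜ : Set ℝ)) ∩ ball (p i) 1 := by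
    refine ⟨⟨⟨by rwa [hpi], by rwa [hpi]⟩, ?_⟩, mem_ball_self one_pos⟩
    simp only [Set.mem_iInter, Set.mem_compl_iff, Set.mem_singleton_iff]
    intro j hj hpj
    have hji : j = i := hp_inj hpj.symm
    have : j < i := Finset.mem_range.1 hj
    omega
  obtain ⟨ε, hε, hball⟩ := Metric.isOpen_iff.1 hUopen (p i) hpiU
  set s := ball (p i) ε with hs_def
  set n : ℕ := k + i + 1 with hn_def
  -- relevant smoothness facts on s
  have hsIoo : s ⊆ Set.Ioo A B := fun x hx => ((hball hx).1).1
  have hsne : ∀ x ∈ s, ∀ j < i, x ≠ p j := by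
    intro x hx j hj
    have := ((hball hx).1).2
    simp only [Set.mem_iInter, Set.mem_compl_iff, Set.mem_singleton_iff] at this
    exact this j (Finset.mem_range.2 hj)
  have hsball1 : s ⊆ ball (p i) 1 := fun x hx => (hball hx).2
  have hFs : ContDiffOn ℝ (n : ℕ) F s := (hFR.mono hsIoo).of_le (by exact_mod_cast le_top)
  have hTs : ContDiffOn ℝ (n : ℕ) (fun x => ∑' j, term (j + (i+1)) x) s := (hTail i).contDiffOn
  have hSs : ContDiffOn ℝ (n : ℕ) (fun x => ∑ j ∈ Finset.range i, term j x) s := by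
    refine ContDiffOn.sum fun j hj => ?_
    intro x hx
    refine ContDiffAt.contDiffWithinAt ?_
    have hxj : x - p j ≠ 0 := sub_ne_zero.2 (hsne x hx j (Finset.mem_range.1 hj))
    have hgj : ContDiffAt ℝ (n : ℕ) (fun y => g (k + j) (y - p j)) x :=
      (contDiffAt_g _ (k + j) hxj).comp x ((hsub _ (p j)).contDiffAt)
    have hbj : ContDiffAt ℝ (n : ℕ) (fun y => φ (y - p j)) x :=
      (φ.contDiffAt (n := ((n : ℕ) : ℕ∞))).comp x ((hsub _ (p j)).contDiffAt)
    exact contDiffAt_const.mul (hbj.mul hgj)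
  -- conclude smoothness of the translated g on s
  have key : ContDiffOn ℝ (n : ℕ) (fun x => g (k + i) (x - p i)) s := by
    have hmain : ContDiffOn ℝ (n : ℕ)
        (fun x => (a i)⁻¹ * (F x - (∑ j ∈ Finset.range i, term j x)
          - ∑' j, term (j + (i+1)) x)) s :=
      contDiffOn_const.mul ((hFs.sub hSs).sub hTs)
    refine hmain.congr fun x hx => ?_
    have hbump : φ (x - p i) = 1 := by
      refine φ.one_of_mem_closedBall ?_
      have hx1 := hsball1 hx
      rw [mem_ball, Real.dist_eq] at hx1
      simp only [mem_closedBall, Real.dist_eq, sub_zero]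
      exact hx1.le
    have hterm_i : term i x = a i * g (k + i) (x - p i) := by
      simp [term, h, hbump]
    have hdx := hdecomp i x
    rw [Finset.sum_range_succ] at hdx
    have hane : a i ≠ 0 := (ha_pos i).ne'
    field_simp
    linarith [hdx, hterm_i]
  -- transfer to a ball around 0 and contradict
  have htrans : ContDiffOn ℝ (n : ℕ) (g (k + i)) (ball (0 : ℝ) ε) := by
    have hcomp : ContDiffOn ℝ (n : ℕ)
        ((fun x => g (k + i) (x - p i)) ∘ (fun y => y + p i)) (ball (0 : ℝ) ε) := by
      refine key.comp ((contDiff_id.add contDiff_const).contDiffOn) ?_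
      intro y hy
      simp only [hs_def, mem_ball, Real.dist_eq] at hy ⊢
      simpa using hy
    refine hcomp.congr fun y hy => ?_
    simp [Function.comp]
  have h0 : (0 : ℝ) ∈ ball (0 : ℝ) ε := mem_ball_self hε
  exact not_contDiffOn_g (k + i) _ isOpen_ball h0 (by exact_mod_cast htrans)
end

section
/- Let $(p_i)_{i \ge 0}$ be a dense sequence in $\mathbb{R}$ and $k \ge 1$. Suppose $(f_i)_{i\ge0}$ are functions $\mathbb{R} \to \mathbb{C}$ with: $f_i \in C^{k+i}(\mathbb{R}) \cap C^{\infty}(\mathbb{R} \setminus \{p_i\})$ and $f_i$ is not $C^{k+i+1}$ at $p_i$. Then there exist positive reals $(a_i)$ such that $f := \sum_{i} a_i f_i$ converges uniformly on compact sets, $f$ is of class $C^k$, and for each $j$, $f$ is not of class $C^{k+j+1}$ at $p_j$; consequently $f$ is not $C^\infty$ on any nonempty open set. -/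
open Filter Metric Topology

/-- A series of `C^N` functions with summable bounds on derivatives up to order `N`
on a ball is `C^N` at the center. -/
lemma aux_contDiffAt_tsum {g : ℕ → ℝ → ℂ} {N : ℕ} {x₀ : ℝ} {r : ℝ} (hr : 0 < r)
    (hg : ∀ i, ContDiff ℝ N (g i)) {u : ℕ → ℝ} (hu : Summable u)
    (hb : ∀ i, ∀ m ≤ N, ∀ x ∈ ball x₀ r, ‖iteratedFDeriv ℝ m (g i) x‖ ≤ u i) :
    ContDiffAt ℝ N (fun x => ∑' i, g i x) x₀ := by
  have hu0 : ∀ i, 0 ≤ u i := fun i =>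
    le_trans (norm_nonneg _) (hb i 0 (Nat.zero_le _) x₀ (mem_ball_self hr))
  set φ : ContDiffBump x₀ := ⟨r/4, r/2, by positivity, by linarith⟩ with hφ
  have hφN : ContDiff ℝ N (φ : ℝ → ℝ) := φ.contDiff.of_le (by exact_mod_cast le_top)
  -- bound on the derivatives of the bump function
  have hCm : ∀ m : ℕ, ∃ C, ∀ x, ‖iteratedFDeriv ℝ m (φ : ℝ → ℝ) x‖ ≤ C := by
    intro m
    exact (φ.contDiff.continuous_iteratedFDeriv (m := m)
      (by exact_mod_cast le_top)).bounded_above_of_compact_support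
      (φ.hasCompactSupport.iteratedFDeriv m)
  choose Cm hCmb using hCm
  set C : ℝ := ∑ m ∈ Finset.range (N + 1), max (Cm m) 0 with hC
  have hC0 : 0 ≤ C := Finset.sum_nonneg fun m _ => le_max_right _ _
  have hCb : ∀ m ≤ N, ∀ x, ‖iteratedFDeriv ℝ m (φ : ℝ → ℝ) x‖ ≤ C := by
    intro m hm x
    refine le_trans (le_trans (hCmb m x) (le_max_left (Cm m) 0)) ?_
    exact Finset.single_le_sum (f := fun m => max (Cm m) 0)
      (fun i _ => le_max_right _ _) (Finset.mem_range.2 (Nat.lt_succ_of_le hm))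
  set h : ℕ → ℝ → ℂ := fun i x => φ x • g i x with hh
  have hhc : ∀ i, ContDiff ℝ N (h i) := fun i => hφN.smul (hg i)
  -- outside the ball, `h i` vanishes
  have hsupp : ∀ i, tsupport (h i) ⊆ ball x₀ r := by
    intro i
    have h1 : Function.support (h i) ⊆ ball x₀ (r / 2) := by
      intro x hx
      rw [Function.mem_support] at hx
      by_contra hxm
      have hφ0 : φ x = 0 := by
        have : x ∉ Function.support (φ : ℝ → ℝ) := by rw [φ.support_eq]; exact hxm
        simpa [Function.mem_support, not_not] using this
      exact hx (by simp [hh, hφ0])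
    exact le_trans (closure_mono h1) (le_trans closure_ball_subset_closedBall
      (closedBall_subset_ball (by linarith)))
  have hbh : ∀ (m : ℕ) (i : ℕ) (x : ℝ), m ≤ N →
      ‖iteratedFDeriv ℝ m (h i) x‖ ≤ (2 ^ N * C) * u i := by
    intro m i x hm
    by_cases hx : x ∈ ball x₀ r
    · calc ‖iteratedFDeriv ℝ m (h i) x‖
          ≤ ∑ j ∈ Finset.range (m + 1), (m.choose j : ℝ) *
              ‖iteratedFDeriv ℝ j (φ : ℝ → ℝ) x‖ * ‖iteratedFDeriv ℝ (m - j) (g i) x‖ :=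
            norm_iteratedFDeriv_smul_le hφN (hg i) x (by exact_mod_cast hm)
        _ ≤ ∑ j ∈ Finset.range (m + 1), (m.choose j : ℝ) * C * u i := by
            refine Finset.sum_le_sum fun j hj => ?_
            have h1 : ‖iteratedFDeriv ℝ j (φ : ℝ → ℝ) x‖ ≤ C :=
              hCb j (le_trans (Nat.lt_succ_iff.1 (Finset.mem_range.1 hj)) hm) x
            have h2 : ‖iteratedFDeriv ℝ (m - j) (g i) x‖ ≤ u i :=
              hb i (m - j) (le_trans (Nat.sub_le _ _) hm) x hx
            exact mul_le_mul (mul_le_mul_of_nonneg_left h1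
              (show (0:ℝ) ≤ (m.choose j : ℝ) by positivity)) h2
              (norm_nonneg _) (by positivity)
        _ = (∑ j ∈ Finset.range (m + 1), (m.choose j : ℝ)) * C * u i := by
            rw [Finset.sum_mul, Finset.sum_mul]
        _ ≤ (2 ^ N : ℝ) * C * u i := by
            have : (∑ j ∈ Finset.range (m + 1), (m.choose j : ℝ)) = (2 : ℝ) ^ m := by
              exact_mod_cast congrArg (Nat.cast : ℕ → ℝ) (Nat.sum_range_choose m)
            rw [this]
            have h2 : (2 : ℝ) ^ m ≤ 2 ^ N := by
              exact pow_le_pow_right₀ (by norm_num) hm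
            exact mul_le_mul_of_nonneg_right
              (mul_le_mul_of_nonneg_right h2 hC0) (hu0 i)
        _ = (2 ^ N * C) * u i := by ring
    · have hx' : x ∉ tsupport (iteratedFDeriv ℝ m (h i)) := fun hc =>
        hx (hsupp i (tsupport_iteratedFDeriv_subset m hc))
      rw [image_eq_zero_of_notMem_tsupport hx', norm_zero]
      exact mul_nonneg (mul_nonneg (by positivity) hC0) (hu0 i)
  have Hsum : ContDiff ℝ N (fun x => ∑' i, h i x) :=
    contDiff_tsum hhc (fun m _ => (hu.mul_left _))
      (fun m i x hm => hbh m i x (by exact_mod_cast hm))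
  have heq : (fun x => ∑' i, g i x) =ᶠ[𝓝 x₀] fun x => ∑' i, h i x := by
    filter_upwards [closedBall_mem_nhds x₀ (by positivity : (0:ℝ) < r / 4)] with x hx
    exact tsum_congr fun i => by rw [hh]; simp [φ.one_of_mem_closedBall hx]
  exact Hsum.contDiffAt.congr_of_eventuallyEq heq

set_option maxHeartbeats 1000000 in
/-- Given a dense sequence `(pᵢ)` in `ℝ` and functions `fᵢ` which are `C^{k+i}`, smooth
away from `pᵢ`, and not `C^{k+i+1}` at `pᵢ`, there are positive coefficients `aᵢ` such
that `f = ∑ aᵢ fᵢ` converges locally uniformly, is `C^k`, is not `C^{k+j+1}` at `p_j`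
for every `j`, and hence is not `C^∞` on any nonempty open set. -/
theorem stmt11 (k : ℕ) (hk : 1 ≤ k) (p : ℕ → ℝ) (hp : DenseRange p)
    (f : ℕ → ℝ → ℂ)
    (hf1 : ∀ i, ContDiff ℝ ((k + i : ℕ)) (f i))
    (hf2 : ∀ i, ContDiffOn ℝ (⊤ : ℕ∞) (f i) {p i}ᶜ)
    (hf3 : ∀ i, ¬ ContDiffAt ℝ ((k + i + 1 : ℕ)) (f i) (p i)) :
    ∃ a : ℕ → ℝ, (∀ i, 0 < a i) ∧
      TendstoLocallyUniformly
        (fun (n : ℕ) (x : ℝ) => ∑ i ∈ Finset.range n, (a i : ℂ) * f i x)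
        (fun x => ∑' i, (a i : ℂ) * f i x) atTop ∧
      ContDiff ℝ k (fun x => ∑' i, (a i : ℂ) * f i x) ∧
      (∀ j, ¬ ContDiffAt ℝ ((k + j + 1 : ℕ)) (fun x => ∑' i, (a i : ℂ) * f i x) (p j)) ∧
      ∀ U : Set ℝ, IsOpen U → U.Nonempty →
        ¬ ContDiffOn ℝ (⊤ : ℕ∞) (fun x => ∑' i, (a i : ℂ) * f i x) U := by
  classical
  -- uniform bounds for derivatives of `f i` on balls
  have bnd : ∀ (i : ℕ) (x₀ r : ℝ), ∃ B, 0 ≤ B ∧ ∀ m ≤ k + i,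
      ∀ x ∈ ball x₀ r, ‖iteratedFDeriv ℝ m (f i) x‖ ≤ B := by
    intro i x₀ r
    obtain ⟨D, hD⟩ := (isCompact_closedBall x₀ r).exists_bound_of_continuousOn
      (f := fun x => ∑ m ∈ Finset.range (k + i + 1), ‖iteratedFDeriv ℝ m (f i) x‖)
      (Continuous.continuousOn (by
        refine continuous_finset_sum _ fun m hm => ?_
        have hm' : m ≤ k + i := Nat.lt_succ_iff.1 (Finset.mem_range.1 hm)
        exact ((hf1 i).continuous_iteratedFDeriv (by exact_mod_cast hm')).norm))
    refine ⟨max D 0, le_max_right _ _, fun m hm x hx => ?_⟩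
    have hx' : x ∈ closedBall x₀ r := ball_subset_closedBall hx
    have h1 : ‖iteratedFDeriv ℝ m (f i) x‖ ≤
        ∑ m ∈ Finset.range (k + i + 1), ‖iteratedFDeriv ℝ m (f i) x‖ :=
      Finset.single_le_sum (f := fun m => ‖iteratedFDeriv ℝ m (f i) x‖)
        (fun _ _ => norm_nonneg _) (Finset.mem_range.2 (Nat.lt_succ_of_le hm))
    have h2 := hD x hx'
    rw [Real.norm_eq_abs] at h2
    exact le_trans (le_trans h1 (le_trans (le_abs_self _) h2)) (le_max_left _ _)
  -- the radii of the compact sets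
  set R : ℕ → ℝ := fun i => (i : ℝ) + 1 + ∑ j ∈ Finset.range i, |p j| with hR
  have hRsum : ∀ i, 0 ≤ ∑ j ∈ Finset.range i, |p j| :=
    fun i => Finset.sum_nonneg fun _ _ => abs_nonneg _
  choose B hB0 hB using fun i => bnd i 0 (R i)
  set a : ℕ → ℝ := fun i => (1 / 2) ^ i / (B i + 1) with ha
  have ha0 : ∀ i, 0 < a i := fun i => div_pos (by positivity) (by linarith [hB0 i])
  set g : ℕ → ℝ → ℂ := fun i x => a i • f i x with hg
  -- key derivative bound
  have hgb : ∀ i, ∀ m ≤ k + i, ∀ x ∈ ball (0 : ℝ) (R i),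
      ‖iteratedFDeriv ℝ m (g i) x‖ ≤ (1 / 2) ^ i := by
    intro i m hm x hx
    have hcd : ContDiff ℝ m (f i) := (hf1 i).of_le (by exact_mod_cast hm)
    have heq : iteratedFDeriv ℝ m (g i) x = a i • iteratedFDeriv ℝ m (f i) x :=
      iteratedFDeriv_const_smul_apply' hcd.contDiffAt
    rw [heq, norm_smul (β := ContinuousMultilinearMap ℝ (fun _ : Fin m => ℝ) ℂ) (a i) _,
      Real.norm_eq_abs, abs_of_pos (ha0 i)]
    have h1 : ‖iteratedFDeriv ℝ m (f i) x‖ ≤ B i + 1 :=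
      le_trans (hB i m hm x hx) (by linarith)
    calc a i * ‖iteratedFDeriv ℝ m (f i) x‖ ≤ a i * (B i + 1) :=
          mul_le_mul_of_nonneg_left h1 (ha0 i).le
      _ = (1 / 2) ^ i := by
          rw [ha]; exact div_mul_cancel₀ _ (by linarith [hB0 i] : B i + 1 ≠ 0)
  -- membership helpers
  have hmem1 : ∀ (i : ℕ) (x y : ℝ), |x| + 1 ≤ (i : ℝ) → y ∈ ball x 1 →
      y ∈ ball (0 : ℝ) (R i) := by
    intro i x y hxi hy
    rw [mem_ball, Real.dist_eq] at hy ⊢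
    have h1 : |y| ≤ |y - x| + |x| := by
      calc |y| = |y - x + x| := by ring_nf
        _ ≤ |y - x| + |x| := abs_add_le _ _
    have := hRsum i
    rw [hR]
    simp only [sub_zero]
    linarith
  have hmem2 : ∀ (j i : ℕ), j < i → ∀ y ∈ ball (p j) 1, y ∈ ball (0 : ℝ) (R i) := by
    intro j i hji y hy
    rw [mem_ball, Real.dist_eq] at hy ⊢
    have h1 : |y| ≤ |y - p j| + |p j| := by
      calc |y| = |y - p j + p j| := by ring_nf
        _ ≤ |y - p j| + |p j| := abs_add_le _ _
    have h2 : |p j| ≤ ∑ j' ∈ Finset.range i, |p j'| :=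
      Finset.single_le_sum (f := fun j' => |p j'|) (fun _ _ => abs_nonneg _)
        (Finset.mem_range.2 hji)
    have h3 : (0 : ℝ) ≤ (i : ℝ) := Nat.cast_nonneg i
    rw [hR]
    simp only [sub_zero]
    linarith
  -- pointwise summability
  have hsummable : ∀ x : ℝ, Summable fun i => g i x := by
    intro x
    apply Summable.of_norm_bounded_eventually_nat (g := fun i => (1 / 2 : ℝ) ^ i)
      summable_geometric_two
    filter_upwards [eventually_ge_atTop (⌈|x|⌉₊ + 1)] with i hi
    have hxi : |x| + 1 ≤ (i : ℝ) := by
      have h1 : |x| ≤ (⌈|x|⌉₊ : ℝ) := Nat.le_ceil _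
      have h2 : ((⌈|x|⌉₊ + 1 : ℕ) : ℝ) ≤ (i : ℝ) := Nat.cast_le.2 hi
      push_cast at h2
      linarith
    have hmem : x ∈ ball (0 : ℝ) (R i) := hmem1 i x x hxi (mem_ball_self one_pos)
    simpa [norm_iteratedFDeriv_zero] using hgb i 0 (Nat.zero_le _) x hmem
  -- local uniform bounds for derivatives up to order `k`
  have loc : ∀ x : ℝ, ∃ u' : ℕ → ℝ, Summable u' ∧
      ∀ i, ∀ m ≤ k, ∀ y ∈ ball x 1, ‖iteratedFDeriv ℝ m (g i) y‖ ≤ u' i := by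
    intro x
    set n₀ := ⌈|x|⌉₊ + 1 with hn₀
    choose B' hB'0 hB' using fun i => bnd i x 1
    refine ⟨fun i => if i < n₀ then a i * (B' i + 1) else (1 / 2) ^ i, ?_, ?_⟩
    · apply (summable_nat_add_iff n₀).1
      refine Summable.congr (f := fun i => (1 / 2 : ℝ) ^ (i + n₀)) ?_ ?_
      · simp_rw [pow_add]
        exact summable_geometric_two.mul_right _
      · intro i
        rw [if_neg (by omega)]
    · intro i m hm y hy
      show ‖iteratedFDeriv ℝ m (g i) y‖ ≤ if i < n₀ then a i * (B' i + 1) else (1 / 2) ^ i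
      by_cases hi : i < n₀
      · rw [if_pos hi]
        have hcd : ContDiff ℝ m (f i) :=
          (hf1 i).of_le (by exact_mod_cast le_trans hm (Nat.le_add_right k i))
        have heq : iteratedFDeriv ℝ m (g i) y = a i • iteratedFDeriv ℝ m (f i) y :=
          iteratedFDeriv_const_smul_apply' hcd.contDiffAt
        rw [heq, norm_smul (β := ContinuousMultilinearMap ℝ (fun _ : Fin m => ℝ) ℂ) (a i) _,
          Real.norm_eq_abs, abs_of_pos (ha0 i)]
        exact mul_le_mul_of_nonneg_left
          (le_trans (hB' i m (le_trans hm (Nat.le_add_right k i)) y hy) (by linarith [hB'0 i]))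
          (ha0 i).le
      · rw [if_neg hi]
        refine hgb i m (le_trans hm (Nat.le_add_right k i)) y ?_
        refine hmem1 i x y ?_ hy
        have h1 : |x| ≤ (⌈|x|⌉₊ : ℝ) := Nat.le_ceil _
        have h2 : ((n₀ : ℕ) : ℝ) ≤ (i : ℝ) := Nat.cast_le.2 (not_lt.1 hi)
        rw [hn₀] at h2
        push_cast at h2
        linarith
  -- main properties in terms of `g`
  have B1 : TendstoLocallyUniformly (fun n x => ∑ i ∈ Finset.range n, g i x)
      (fun x => ∑' i, g i x) atTop := by
    intro v hv x
    obtain ⟨u', hu's, hu'b⟩ := loc x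
    refine ⟨ball x 1, ball_mem_nhds x one_pos, ?_⟩
    have ht : TendstoUniformlyOn (fun n y => ∑ i ∈ Finset.range n, g i y)
        (fun y => ∑' i, g i y) atTop (ball x 1) :=
      tendstoUniformlyOn_tsum_nat hu's fun i y hy => by
        simpa [norm_iteratedFDeriv_zero] using hu'b i 0 (Nat.zero_le _) y hy
    exact ht v hv
  have B2 : ContDiff ℝ k (fun x => ∑' i, g i x) := by
    rw [contDiff_iff_contDiffAt]
    intro x
    obtain ⟨u', hu's, hu'b⟩ := loc x
    exact aux_contDiffAt_tsum one_pos
      (fun i => ((hf1 i).of_le (by exact_mod_cast Nat.le_add_right k i)).const_smul (a i))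
      hu's hu'b
  have B3 : ∀ j, ¬ ContDiffAt ℝ ((k + j + 1 : ℕ)) (fun x => ∑' i, g i x) (p j) := by
    intro j hcd
    have hex : ∃ i, p i = p j := ⟨j, rfl⟩
    have hpi₀ : p (Nat.find hex) = p j := Nat.find_spec hex
    set i₀ := Nat.find hex with hi₀
    have hi₀j : i₀ ≤ j := Nat.find_le rfl
    -- the tail is regular enough at p j
    have htail : ContDiffAt ℝ ((k + i₀ + 1 : ℕ))
        (fun x => ∑' i, g (i + (i₀ + 1)) x) (p j) := by
      refine aux_contDiffAt_tsum (u := fun i => (1 / 2 : ℝ) ^ (i + (i₀ + 1))) one_pos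
        (fun i => ?_) ?_ ?_
      · exact ((hf1 (i + (i₀ + 1))).of_le
          (by exact_mod_cast (by omega : k + i₀ + 1 ≤ k + (i + (i₀ + 1))))).const_smul _
      · simp_rw [pow_add]
        exact summable_geometric_two.mul_right _
      · intro i m hm y hy
        refine hgb (i + (i₀ + 1)) m (le_trans hm (by omega)) y ?_
        exact hmem2 i₀ (i + (i₀ + 1)) (by omega) y (by rwa [hpi₀])
    -- the head below i₀ is smooth at p j
    have hhead : ContDiffAt ℝ ((k + i₀ + 1 : ℕ))
        (fun x => ∑ i ∈ Finset.range i₀, g i x) (p j) := by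
      refine ContDiffAt.sum fun i hi => ?_
      have hilt : i < i₀ := Finset.mem_range.1 hi
      have hne : ¬ p i = p j := Nat.find_min hex hilt
      have h1 : ContDiffAt ℝ ((k + i₀ + 1 : ℕ)) (f i) (p j) := by
        have h2 := (hf2 i).contDiffAt
          (IsOpen.mem_nhds isOpen_compl_singleton (by simpa using fun h => hne h.symm))
        exact h2.of_le (by exact_mod_cast le_top)
      exact h1.const_smul _
    have hF : ContDiffAt ℝ ((k + i₀ + 1 : ℕ)) (fun x => ∑' i, g i x) (p j) :=
      hcd.of_le (by exact_mod_cast (by omega : k + i₀ + 1 ≤ k + j + 1))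
    have hps : ContDiffAt ℝ ((k + i₀ + 1 : ℕ))
        (fun x => ∑ i ∈ Finset.range (i₀ + 1), g i x) (p j) := by
      refine (hF.sub htail).congr_of_eventuallyEq (Filter.Eventually.of_forall fun x => ?_)
      exact eq_sub_of_add_eq (Summable.sum_add_tsum_nat_add (i₀ + 1) (hsummable x))
    have hg₀ : ContDiffAt ℝ ((k + i₀ + 1 : ℕ)) (g i₀) (p j) := by
      refine (hps.sub hhead).congr_of_eventuallyEq (Filter.Eventually.of_forall fun x => ?_)
      show g i₀ x = (∑ i ∈ Finset.range (i₀ + 1), g i x) - ∑ i ∈ Finset.range i₀, g i x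
      rw [Finset.sum_range_succ]
      ring
    apply hf3 i₀
    have hfeq : ∀ x : ℝ, f i₀ x = (a i₀)⁻¹ • g i₀ x := by
      intro x
      rw [hg]
      simp only []
      rw [smul_smul, inv_mul_cancel₀ (ha0 i₀).ne', one_smul]
    have hfin := (hg₀.const_smul ((a i₀)⁻¹)).congr_of_eventuallyEq
      (Filter.Eventually.of_forall hfeq)
    rw [hi₀, hpi₀]
    exact hfin
  refine ⟨a, ha0, ?_⟩
  have hrw : ∀ (i : ℕ) (x : ℝ), (a i : ℂ) * f i x = g i x := fun i x => by
    rw [← Complex.real_smul]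
  simp only [hrw]
  refine ⟨B1, B2, B3, ?_⟩
  intro U hU hne hcd
  obtain ⟨j, hj⟩ := hp.exists_mem_open hU hne
  exact B3 j ((hcd.contDiffAt (hU.mem_nhds hj)).of_le (by exact_mod_cast le_top))
end

section
/- Let $\lambda > 0$, $n \le N$, and let $A$ be an $n \times N$ complex matrix with $\lambda I_n = A\,E(n,N)\,A^*$. Then there exists an $N \times N$ complex matrix $W$ with $W\,E(n,N)\,W^* = E(n,N)$ such that $A\,W = (\sqrt{\lambda}\, I_n \;\; 0_{n \times (N-n)})$ after replacing $A$ by $\overline{A}$, i.e., $\overline{A}\,W = (\sqrt{\lambda}\, I_n \;\; 0)$. -/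
/-!
In block coordinates `Fin N ≃ Fin n ⊕ Fin (N - n)` the signature matrix is `J = diag(1, -1)`,
and `C = conj(A) / √λ` satisfies `C J Cᴴ = 1`. Writing `C = (C₁ | C₂)`, the rows of `C` extend
to a `J`-unitary matrix `U = (C; D)` with `D = S (C₂ᴴ (C₁C₁ᴴ)⁻¹ C₁ | 1)`, where `SᴴS = 1 + C₂ᴴC₂`
(a square root of a positive definite matrix); the Woodbury identity gives `D J Dᴴ = -1`.
Then `W = J Uᴴ = U⁻¹` is `J`-unitary and `C W = (1 | 0)`.
-/

open Matrix

/-- The signature matrix `E(n,N)`: diagonal with first `n` entries `1`, rest `-1`. -/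
def sigMatrix (l N : ℕ) : Matrix (Fin N) (Fin N) ℂ :=
  Matrix.diagonal (fun j => if (j : ℕ) < l then 1 else -1)

namespace Matrix

theorem map_starRingEnd_mul_mul_conjTranspose {k ι R : Type*} [Fintype ι] [CommRing R]
    [StarRing R] {D : Matrix ι ι R} (hD : Dᵀ = D) (A : Matrix k ι R) :
    A.map (starRingEnd R) * D * (A.map (starRingEnd R))ᴴ = (A * D * Aᴴ)ᵀ := by
  have hAH : (A.map (starRingEnd R))ᴴ = Aᵀ := by ext; simp [starRingEnd_apply]
  have hAHT : Aᴴᵀ = A.map (starRingEnd R) := by ext; simp [starRingEnd_apply]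
  rw [transpose_mul, transpose_mul, hD, hAH, hAHT, Matrix.mul_assoc]

theorem submatrix_mul_mul_conjTranspose_submatrix {k l k' l' ι κ R : Type*} [Fintype ι]
    [Fintype κ] [Semiring R] [Star R] (X : Matrix k ι R) (J : Matrix ι ι R) (Y : Matrix l ι R)
    (f : k' → k) (g : l' → l) (e : κ ≃ ι) :
    X.submatrix f e * J.submatrix e e * (Y.submatrix g e)ᴴ = (X * J * Yᴴ).submatrix f g := by
  rw [conjTranspose_submatrix, submatrix_mul_equiv, submatrix_mul_equiv]

theorem conjTranspose_mul_mul_self_eq_of_mul_mul_conjTranspose_eq {ι R : Type*} [Fintype ι]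
    [DecidableEq ι] [CommRing R] [StarRing R] {J U : Matrix ι ι R} (hJ : J * J = 1)
    (hU : U * J * Uᴴ = J) : Uᴴ * J * U = J := by
  have h : (U * J) * (Uᴴ * J) = 1 := by rw [← Matrix.mul_assoc, hU, hJ]
  calc Uᴴ * J * U = Uᴴ * J * (U * J) * J := by
        rw [Matrix.mul_assoc _ (U * J), Matrix.mul_assoc U, hJ, Matrix.mul_one, Matrix.mul_assoc]
    _ = J := by rw [mul_eq_one_comm.mp h, Matrix.one_mul]

open scoped ComplexOrder MatrixOrder in
theorem PosDef.exists_conjTranspose_mul_self_eq {n 𝕜 : Type*} [Fintype n] [DecidableEq n]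
    [RCLike 𝕜] {P : Matrix n n 𝕜} (hP : P.PosDef) :
    ∃ S : Matrix n n 𝕜, IsUnit S ∧ Sᴴ * S = P := by
  have hS : (CFC.sqrt P)ᴴ * CFC.sqrt P = P := by
    rw [(CFC.sqrt_nonneg P).posSemidef.1.eq, CFC.sqrt_mul_sqrt_self P hP.posSemidef.nonneg]
  exact ⟨CFC.sqrt P, isUnit_of_mul_isUnit_right (hS.symm ▸ hP.isUnit), hS⟩

section Signature

variable (n m R : Type*) [DecidableEq n] [DecidableEq m] [CommRing R]

def blockSignature : Matrix (n ⊕ m) (n ⊕ m) R := fromBlocks 1 0 0 (-1)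

theorem conjTranspose_blockSignature [StarRing R] :
    (blockSignature n m R)ᴴ = blockSignature n m R := by
  simp [blockSignature, fromBlocks_conjTranspose]

variable [Fintype n] [Fintype m]

theorem blockSignature_mul_self : blockSignature n m R * blockSignature n m R = 1 := by
  simp [blockSignature, fromBlocks_multiply]

variable {n m R} [StarRing R]

theorem fromCols_mul_blockSignature_mul_conjTranspose_fromCols {k l : Type*}
    (A₁ : Matrix k n R) (A₂ : Matrix k m R) (B₁ : Matrix l n R) (B₂ : Matrix l m R) :
    fromCols A₁ A₂ * blockSignature n m R * (fromCols B₁ B₂)ᴴ = A₁ * B₁ᴴ - A₂ * B₂ᴴ := by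
  simp [blockSignature, fromCols_mul_fromBlocks, conjTranspose_fromCols_eq_fromRows_conjTranspose,
    fromCols_mul_fromRows, sub_eq_add_neg]

end Signature

section Completion

variable {n m 𝕜 : Type*} [Fintype n] [Fintype m] [DecidableEq n] [DecidableEq m] [RCLike 𝕜]

open scoped ComplexOrder in
theorem exists_mul_blockSignature_mul_conjTranspose_eq_neg_one
    {C : Matrix n (n ⊕ m) 𝕜} (hC : C * blockSignature n m 𝕜 * Cᴴ = 1) :
    ∃ D : Matrix m (n ⊕ m) 𝕜,
      D * blockSignature n m 𝕜 * Cᴴ = 0 ∧ D * blockSignature n m 𝕜 * Dᴴ = -1 := by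
  obtain ⟨C₁, C₂, rfl⟩ : ∃ C₁ C₂, C = fromCols C₁ C₂ := ⟨_, _, (fromCols_toCols C).symm⟩
  rw [fromCols_mul_blockSignature_mul_conjTranspose_fromCols, sub_eq_iff_eq_add] at hC
  have hM : IsUnit (1 + C₂ * C₂ᴴ).det := (isUnit_iff_isUnit_det _).mp
    (PosDef.one.add_posSemidef (posSemidef_self_mul_conjTranspose C₂)).isUnit
  obtain ⟨S, hS, hSS⟩ := (PosDef.one.add_posSemidef
    (posSemidef_conjTranspose_mul_self C₂)).exists_conjTranspose_mul_self_eq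
  have hSd : IsUnit S.det := (isUnit_iff_isUnit_det _).mp hS
  -- `D = S (K | 1)`: `K C₁ᴴ = C₂ᴴ` makes `D` orthogonal to `C`, and `S` normalises `D J Dᴴ`.
  set K := C₂ᴴ * (1 + C₂ * C₂ᴴ)⁻¹ * C₁ with hK
  have hKC : K * C₁ᴴ = C₂ᴴ := by
    rw [hK, Matrix.mul_assoc, hC, nonsing_inv_mul_cancel_right _ _ hM]
  have hKK : K * Kᴴ = 1 - (Sᴴ * S)⁻¹ := by
    have woodbury := add_mul_mul_inv_eq_sub (1 : Matrix m m 𝕜) C₂ᴴ 1 C₂ isUnit_one isUnit_one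
      (by simpa using (isUnit_iff_isUnit_det _).mpr hM)
    simp only [inv_one, Matrix.mul_one, Matrix.one_mul] at woodbury
    have hKH : Kᴴ = C₁ᴴ * (1 + C₂ * C₂ᴴ)⁻¹ * C₂ := by
      simp [hK, conjTranspose_nonsing_inv, Matrix.mul_assoc]
    rw [hSS, woodbury, sub_sub_cancel, hKH, ← Matrix.mul_assoc, ← Matrix.mul_assoc, hKC]
  have hSinv : S * (Sᴴ * S)⁻¹ * Sᴴ = 1 := by
    rw [Matrix.mul_inv_rev, ← Matrix.mul_assoc, mul_nonsing_inv _ hSd, Matrix.one_mul,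
      nonsing_inv_mul _ (by rw [det_conjTranspose]; exact hSd.star)]
  refine ⟨S * fromCols K (1 : Matrix m m 𝕜), ?_, ?_⟩
  · rw [Matrix.mul_assoc, Matrix.mul_assoc, ← Matrix.mul_assoc _ _ (fromCols C₁ C₂)ᴴ,
      fromCols_mul_blockSignature_mul_conjTranspose_fromCols, hKC, Matrix.one_mul, sub_self,
      Matrix.mul_zero]
  · have hK1 := fromCols_mul_blockSignature_mul_conjTranspose_fromCols K (1 : Matrix m m 𝕜) K 1
    rw [hKK, conjTranspose_one, Matrix.mul_one, sub_sub_cancel_left] at hK1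
    calc _ = S * -(Sᴴ * S)⁻¹ * Sᴴ := by
          rw [← hK1]; simp only [conjTranspose_mul, Matrix.mul_assoc]
      _ = -1 := by rw [Matrix.mul_neg, Matrix.neg_mul, hSinv]

theorem exists_mul_blockSignature_mul_conjTranspose_eq_and_mul_eq_fromCols
    {C : Matrix n (n ⊕ m) 𝕜} (hC : C * blockSignature n m 𝕜 * Cᴴ = 1) :
    ∃ V : Matrix (n ⊕ m) (n ⊕ m) 𝕜,
      V * blockSignature n m 𝕜 * Vᴴ = blockSignature n m 𝕜 ∧ C * V = fromCols 1 0 := by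
  obtain ⟨D, hDC, hDD⟩ := exists_mul_blockSignature_mul_conjTranspose_eq_neg_one hC
  set J := blockSignature n m 𝕜
  have hCD : C * J * Dᴴ = 0 := by
    simpa [Matrix.mul_assoc, J, conjTranspose_blockSignature] using congrArg conjTranspose hDC
  have hU : fromRows C D * J * (fromRows C D)ᴴ = J := by
    rw [conjTranspose_fromRows_eq_fromCols_conjTranspose, fromRows_mul, fromRows_mul,
      mul_fromCols, mul_fromCols, hC, hCD, hDC, hDD, fromRows_fromCols_eq_fromBlocks]
    rfl
  refine ⟨J * (fromRows C D)ᴴ, ?_, ?_⟩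
  · rw [conjTranspose_mul, conjTranspose_conjTranspose, conjTranspose_blockSignature]
    calc J * (fromRows C D)ᴴ * J * (fromRows C D * J)
        = J * ((fromRows C D)ᴴ * J * fromRows C D) * J := by simp only [Matrix.mul_assoc]
      _ = J := by
        rw [conjTranspose_mul_mul_self_eq_of_mul_mul_conjTranspose_eq
          (blockSignature_mul_self n m 𝕜) hU, blockSignature_mul_self, Matrix.one_mul]
  · rw [conjTranspose_fromRows_eq_fromCols_conjTranspose, ← Matrix.mul_assoc, mul_fromCols, hC,
      hCD]

theorem exists_mul_blockSignature_mul_conjTranspose_eq_and_mul_eq_sqrt_smul_fromCols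
    {C : Matrix n (n ⊕ m) 𝕜} {r : ℝ} (hr : 0 < r)
    (hC : C * blockSignature n m 𝕜 * Cᴴ = (r : 𝕜) • 1) :
    ∃ V : Matrix (n ⊕ m) (n ⊕ m) 𝕜, V * blockSignature n m 𝕜 * Vᴴ = blockSignature n m 𝕜 ∧
      C * V = (Real.sqrt r : 𝕜) • fromCols 1 0 := by
  set c : 𝕜 := (Real.sqrt r : 𝕜)
  have hc : c ≠ 0 := by simpa [c] using (Real.sqrt_pos.mpr hr).ne'
  have hcC : (c⁻¹ • C) * blockSignature n m 𝕜 * (c⁻¹ • C)ᴴ = 1 := by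
    have hstar : star c⁻¹ = c⁻¹ := by simp [c]
    have hcc : c⁻¹ * c⁻¹ * r = 1 := by
      rw [← Real.mul_self_sqrt hr.le, RCLike.ofReal_mul, ← mul_inv,
        inv_mul_cancel₀ (mul_ne_zero hc hc)]
    rw [conjTranspose_smul, Matrix.smul_mul, Matrix.smul_mul, Matrix.mul_smul, hC, smul_smul,
      smul_smul, hstar, hcc, one_smul]
  obtain ⟨V, hVJ, hCV⟩ := exists_mul_blockSignature_mul_conjTranspose_eq_and_mul_eq_fromCols hcC
  refine ⟨V, hVJ, ?_⟩
  rw [← hCV, smul_mul, smul_smul, mul_inv_cancel₀ hc, one_smul]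

end Completion

end Matrix

theorem sigMatrix_add_eq_submatrix (n m : ℕ) :
    sigMatrix n (n + m) =
      (blockSignature (Fin n) (Fin m) ℂ).submatrix finSumFinEquiv.symm finSumFinEquiv.symm := by
  rw [blockSignature, ← diagonal_one, ← diagonal_one, diagonal_neg, fromBlocks_diagonal,
    submatrix_diagonal_equiv]
  refine congrArg diagonal (funext fun j => ?_)
  refine Fin.addCases (fun a => ?_) (fun b => ?_) j <;> simp

theorem submatrix_smul_fromCols_one_zero_finSumFinEquiv {R : Type*} [Semiring R] (n m : ℕ)
    (a : R) :
    (a • fromCols (1 : Matrix (Fin n) (Fin n) R) (0 : Matrix (Fin n) (Fin m) R)).submatrix id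
        finSumFinEquiv.symm =
      of fun (i : Fin n) (j : Fin (n + m)) => if (j : ℕ) = i then a else 0 := by
  ext i j
  refine Fin.addCases (fun k => ?_) (fun k => ?_) j
  · simp [one_apply, Fin.ext_iff, eq_comm]
  · simp
    omega

/-- If `λ Iₙ = A E(n,N) A*` with `λ > 0` and `n ≤ N`, there exists `W` in the
indefinite unitary group `U(n, N-n)` (i.e. `W E(n,N) W* = E(n,N)`) with
`conj(A) ⬝ W = (√λ Iₙ | 0)`. -/
theorem stmt12 (n N : ℕ) (hnN : n ≤ N) (lam : ℝ) (hlam : 0 < lam)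
    (A : Matrix (Fin n) (Fin N) ℂ)
    (h : (lam : ℂ) • (1 : Matrix (Fin n) (Fin n) ℂ) = A * sigMatrix n N * Aᴴ) :
    ∃ W : Matrix (Fin N) (Fin N) ℂ,
      W * sigMatrix n N * Wᴴ = sigMatrix n N ∧
      (A.map (starRingEnd ℂ)) * W =
        Matrix.of (fun (i : Fin n) (j : Fin N) =>
          if (j : ℕ) = (i : ℕ) then (Real.sqrt lam : ℂ) else 0) := by
  obtain ⟨m, rfl⟩ := Nat.exists_eq_add_of_le hnN
  set e : Fin n ⊕ Fin m ≃ Fin (n + m) := finSumFinEquiv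
  set B := (A.map (starRingEnd ℂ)).submatrix id e
  have hB : A.map (starRingEnd ℂ) = B.submatrix id e.symm := by simp [B]
  have hBJ : B * blockSignature (Fin n) (Fin m) ℂ * Bᴴ = (lam : ℂ) • 1 := by
    have := congrArg transpose h
    rw [← map_starRingEnd_mul_mul_conjTranspose (by simp [sigMatrix]), hB,
      sigMatrix_add_eq_submatrix, submatrix_mul_mul_conjTranspose_submatrix] at this
    simpa using this.symm
  obtain ⟨V, hVJ, hBV⟩ :=
    exists_mul_blockSignature_mul_conjTranspose_eq_and_mul_eq_sqrt_smul_fromCols hlam hBJ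
  refine ⟨V.submatrix e.symm e.symm, ?_, ?_⟩
  · rw [sigMatrix_add_eq_submatrix, submatrix_mul_mul_conjTranspose_submatrix, hVJ]
  · rw [hB, submatrix_mul_equiv, hBV, submatrix_smul_fromCols_one_zero_finSumFinEquiv]
    rfl
end
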